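/- Let α ∈ ℂ, β ∈ ℝ with β > Re α, and let u : (0,1] → ℂ be continuously differentiable with |x * u'(x) − α * u(x)| ≤ C * x^β for all x ∈ (0,1]. Then the limit lim_{x → 0⁺} x^{-α} u(x) exists in ℂ. -/

import Mathlib

/-!
The function `g x = x ^ (-α) * u x` has derivative `x ^ (-α - 1) * (x * u' x - α * u x)`, whose
norm is at most `C * x ^ (γ - 1)` with `γ = β - Re α > 0`. Comparing `g` with a primitive of this
majorant gives `‖g y - g x‖ ≤ C * y ^ γ / γ` for `0 < x ≤ y ≤ 1`, so `g` is Cauchy at `0⁺`.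
-/

open Filter Set Topology

section IncrementBound

variable {E : Type*} [NormedAddCommGroup E] [NormedSpace ℝ E]

/-- Comparison with `B t = C (t ^ γ - x ^ γ) / γ`, whose derivative is the majorant `C t ^ (γ - 1)`. -/
theorem norm_sub_le_of_norm_deriv_le_rpow {f f' : ℝ → E} {C γ x y : ℝ} (hγ : γ ≠ 0)
    (hx : 0 < x) (hxy : x ≤ y) (hf : ∀ t ∈ Icc x y, HasDerivAt f (f' t) t)
    (bound : ∀ t ∈ Ico x y, ‖f' t‖ ≤ C * t ^ (γ - 1)) :
    ‖f y - f x‖ ≤ C * (y ^ γ - x ^ γ) / γ := by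
  have hpos : ∀ t ∈ Icc x y, 0 < t := fun t ht => hx.trans_le ht.1
  have hB : ∀ t ∈ Icc x y,
      HasDerivAt (fun s : ℝ => C * (s ^ γ - x ^ γ) / γ) (C * t ^ (γ - 1)) t := by
    intro t ht
    refine ((((Real.hasDerivAt_rpow_const (Or.inl (hpos t ht).ne')).sub_const
      (x ^ γ)).const_mul C).div_const γ).congr_deriv ?_
    field_simp
  refine image_norm_le_of_norm_deriv_right_le_deriv_boundary' (f := fun t => f t - f x)
    (fun t ht => (hf t ht).continuousAt.continuousWithinAt.sub continuousWithinAt_const)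
    (fun t ht => ((hf t (Ico_subset_Icc_self ht)).sub_const (f x)).hasDerivWithinAt)
    (by simp) (fun t ht => (hB t ht).continuousAt.continuousWithinAt)
    (fun t ht => (hB t (Ico_subset_Icc_self ht)).hasDerivWithinAt) bound ⟨hxy, le_rfl⟩

end IncrementBound

section LimitAtRightEndpoint

variable {E : Type*} [NormedAddCommGroup E] [CompleteSpace E]

theorem exists_tendsto_nhdsGT_of_norm_sub_le {g : ℝ → E} {φ : ℝ → ℝ} {a b : ℝ} (hab : b < a)
    (hφ : Tendsto φ (𝓝[>] b) (𝓝 0))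
    (h : ∀ x ∈ Ioo b a, ∀ y ∈ Ioo b a, x ≤ y → ‖g y - g x‖ ≤ φ y) :
    ∃ l, Tendsto g (𝓝[>] b) (𝓝 l) := by
  refine cauchy_map_iff_exists_tendsto.1 (Metric.cauchy_iff.2 ⟨map_neBot, fun ε hε => ?_⟩)
  have hs : {t | t ∈ Ioo b a ∧ φ t < ε} ∈ 𝓝[>] b :=
    inter_mem (Ioo_mem_nhdsGT hab) (hφ.eventually (gt_mem_nhds hε))
  refine ⟨g '' _, image_mem_map hs, ?_⟩
  rintro _ ⟨x, ⟨hx, hxε⟩, rfl⟩ _ ⟨y, ⟨hy, hyε⟩, rfl⟩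
  rcases le_total x y with hxy | hyx
  · rw [dist_comm, dist_eq_norm]
    exact (h x hx y hy hxy).trans_lt hyε
  · rw [dist_eq_norm]
    exact (h y hy x hx hyx).trans_lt hxε

theorem exists_tendsto_nhdsGT_zero_of_norm_deriv_le_rpow [NormedSpace ℝ E] {f f' : ℝ → E}
    {C γ a : ℝ} (hγ : 0 < γ) (ha : 0 < a) (hf : ∀ t ∈ Ioc 0 a, HasDerivAt f (f' t) t)
    (bound : ∀ t ∈ Ioc 0 a, ‖f' t‖ ≤ C * t ^ (γ - 1)) :
    ∃ l, Tendsto f (𝓝[>] 0) (𝓝 l) := by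
  have hC : 0 ≤ C := nonneg_of_mul_nonneg_left ((norm_nonneg _).trans (bound a ⟨ha, le_rfl⟩))
    (Real.rpow_pos_of_pos ha _)
  have hφ : Tendsto (fun t : ℝ => C * t ^ γ / γ) (𝓝[>] 0) (𝓝 0) := by
    have := ((Real.continuousAt_rpow_const 0 γ (Or.inr hγ.le)).tendsto.const_mul C).div_const γ
    simpa [Real.zero_rpow hγ.ne'] using this.mono_left nhdsWithin_le_nhds
  refine exists_tendsto_nhdsGT_of_norm_sub_le ha hφ fun x hx y hy hxy => ?_
  calc ‖f y - f x‖ ≤ C * (y ^ γ - x ^ γ) / γ :=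
        norm_sub_le_of_norm_deriv_le_rpow hγ.ne' hx.1 hxy
          (fun t ht => hf t ⟨hx.1.trans_le ht.1, ht.2.trans hy.2.le⟩)
          (fun t ht => bound t ⟨hx.1.trans_le ht.1, ht.2.le.trans hy.2.le⟩)
    _ ≤ C * y ^ γ / γ := by
        gcongr
        exact sub_le_self _ (Real.rpow_nonneg hx.1.le _)

end LimitAtRightEndpoint

theorem hasDerivAt_ofReal_cpow_mul {u : ℝ → ℂ} {u' : ℂ} {x : ℝ} (s : ℂ) (hx : 0 < x)
    (hu : HasDerivAt u u' x) :
    HasDerivAt (fun t : ℝ => (t : ℂ) ^ s * u t) ((x : ℂ) ^ (s - 1) * (x * u' + s * u x)) x := by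
  have hpow : HasDerivAt (fun t : ℝ => (t : ℂ) ^ s) (s * (x : ℂ) ^ (s - 1)) x := by
    simpa using ((hasDerivAt_id (x : ℂ)).cpow_const (c := s)
      (Complex.ofReal_mem_slitPlane.2 hx)).comp_ofReal
  have hsplit : (x : ℂ) ^ s = (x : ℂ) ^ (s - 1) * x := by
    rw [Complex.cpow_sub _ _ (Complex.ofReal_ne_zero.2 hx.ne'), Complex.cpow_one,
      div_mul_cancel₀ _ (Complex.ofReal_ne_zero.2 hx.ne')]
  refine (hpow.mul hu).congr_deriv ?_
  rw [hsplit]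
  ring

theorem stmt4_general (α : ℂ) (β C : ℝ) (hβ : α.re < β) (u u' : ℝ → ℂ)
    (hderiv : ∀ x ∈ Set.Ioc (0 : ℝ) 1, HasDerivAt u (u' x) x)
    (hbound : ∀ x ∈ Set.Ioc (0 : ℝ) 1, ‖(x : ℂ) * u' x - α * u x‖ ≤ C * x ^ β) :
    ∃ l : ℂ, Tendsto (fun x : ℝ => (x : ℂ) ^ (-α) * u x)
      (nhdsWithin 0 (Set.Ioi 0)) (nhds l) := by
  refine exists_tendsto_nhdsGT_zero_of_norm_deriv_le_rpow (C := C) (sub_pos.2 hβ) one_pos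
    (fun x hx => hasDerivAt_ofReal_cpow_mul (-α) hx.1 (hderiv x hx)) fun x hx => ?_
  calc ‖(x : ℂ) ^ (-α - 1) * (x * u' x + -α * u x)‖
      = x ^ (-α.re - 1) * ‖(x : ℂ) * u' x - α * u x‖ := by
        rw [norm_mul, Complex.norm_cpow_eq_rpow_re_of_pos hx.1, neg_mul, ← sub_eq_add_neg]
        simp
    _ ≤ x ^ (-α.re - 1) * (C * x ^ β) :=
        mul_le_mul_of_nonneg_left (hbound x hx) (Real.rpow_nonneg hx.1.le _)
    _ = C * x ^ (β - α.re - 1) := by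
        rw [show β - α.re - 1 = -α.re - 1 + β by ring, Real.rpow_add hx.1]
        ring

/-- If `β > Re α` and `|x u'(x) − α u(x)| ≤ C x^β` on `(0,1]` for a `C¹` function `u`,
then `x^(−α) u(x)` has a limit as `x → 0⁺`. -/
theorem stmt4 (α : ℂ) (β C : ℝ) (hβ : α.re < β) (u u' : ℝ → ℂ)
    (hderiv : ∀ x ∈ Set.Ioc (0 : ℝ) 1, HasDerivAt u (u' x) x)
    (hcont : ContinuousOn u' (Set.Ioc 0 1))
    (hbound : ∀ x ∈ Set.Ioc (0 : ℝ) 1, ‖(x : ℂ) * u' x - α * u x‖ ≤ C * x ^ β) :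
    ∃ l : ℂ, Tendsto (fun x : ℝ => (x : ℂ) ^ (-α) * u x)
      (nhdsWithin 0 (Set.Ioi 0)) (nhds l) :=
  stmt4_general α β C hβ u u' hderiv hbound
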